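/- If v ∈ F₃, then dim_ℚ(v₁, v₂, v₃) = 3; that is, v₁, v₂, v₃ are linearly independent over ℚ (equivalently, the only x ∈ ℤ³ with ⟨v, x⟩ = 0 is x = 0). -/

import Mathlib

open Matrix
open scoped Classical

noncomputable section

abbrev Z3 := Fin 3 → ℤ
abbrev R3 := Fin 3 → ℝ

/-- The inner product `⟨x, v⟩` of an integer vector with a real vector. -/
def dot3 (x : Z3) (v : R3) : ℝ := ∑ i, (x i : ℝ) * v i

/-- Two points of `ℤ³` are 2-adjacent if `‖x − y‖₁ = 1`. -/
def adj3 (x y : Z3) : Prop := (∑ i, |x i - y i|) = 1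

/-- A subset of `ℤ³` is 2-connected if it is nonempty and any two of its points are
joined by a finite chain of points of the set with consecutive points 2-adjacent. -/
def Connected3 (A : Set Z3) : Prop :=
  A.Nonempty ∧ ∀ x ∈ A, ∀ y ∈ A,
    Relation.ReflTransGen (fun a b => b ∈ A ∧ adj3 a b) x y

/-- The arithmetical discrete plane `P(v, ω)`. -/
def Plane (v : R3) (ω : ℝ) : Set Z3 := {x | 0 ≤ dot3 x v ∧ dot3 x v < ω}

/-- The connecting thickness `Ω(v)`. -/
def omegaConn (v : R3) : ℝ := sInf {ω : ℝ | 0 ≤ ω ∧ Connected3 (Plane v ω)}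

/-- `O₃⁺ = {v : 0 ≤ v₁ ≤ v₂ ≤ v₃}`. -/
def O3 : Set R3 := {v | 0 ≤ v 0 ∧ v 0 ≤ v 1 ∧ v 1 ≤ v 2}

/-- The ordered fully subtractive map. -/
def FS (v : R3) : R3 :=
  if v 0 ≤ v 1 - v 0 ∧ v 1 - v 0 ≤ v 2 - v 0 then ![v 0, v 1 - v 0, v 2 - v 0]
  else if v 1 - v 0 < v 0 ∧ v 0 ≤ v 2 - v 0 then ![v 1 - v 0, v 0, v 2 - v 0]
  else ![v 1 - v 0, v 2 - v 0, v 0]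

/-- `F₃ = {v ∈ O₃⁺ : v₁⁽ⁿ⁾ + v₂⁽ⁿ⁾ > v₃⁽ⁿ⁾ for all n}`. -/
def F3set : Set R3 :=
  {v | v ∈ O3 ∧ ∀ n : ℕ, (FS^[n] v) 2 < (FS^[n] v) 0 + (FS^[n] v) 1}

/-- Branch index of `F` at `v`: values `0, 1, 2` encode the branches labelled `1, 2, 3`. -/
def FSidx (v : R3) : Fin 3 :=
  if v 0 ≤ v 1 - v 0 ∧ v 1 - v 0 ≤ v 2 - v 0 then 0
  else if v 1 - v 0 < v 0 ∧ v 0 ≤ v 2 - v 0 then 1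
  else 2

/-- The matrices `M₁, M₂, M₃` of the fully subtractive algorithm. -/
def Mmat : Fin 3 → Matrix (Fin 3) (Fin 3) ℤ :=
  ![!![1,0,0; 1,1,0; 1,0,1], !![0,1,0; 1,1,0; 0,1,1], !![0,0,1; 1,0,1; 0,1,1]]

def e1 : Z3 := ![1,0,0]

/-- The product `M₁ ⋯ Mₙ` of the matrices associated with the F-expansion of `v`. -/
def prodM (v : R3) (n : ℕ) : Matrix (Fin 3) (Fin 3) ℤ :=
  ((List.range n).map (fun j => Mmat (FSidx (FS^[j] v)))).prod

/-- The translation vector `((M₁⋯Mₙ)ᵀ)⁻¹ · e₁`. -/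
def transVec (v : R3) (n : ℕ) : Z3 := ((prodM v n)ᵀ)⁻¹ *ᵥ e1

/-- The sequence `Tₙ` of subsets of `ℤ³`: `T₀ = {0}`, `T_{n+1} = Tₙ ∪ (Tₙ + ((M₁⋯Mₙ)ᵀ)⁻¹·e₁)`
(so that `T₁ = {0, e₁}`, the empty matrix product being the identity). -/
def Tseq (v : R3) : ℕ → Set Z3
  | 0 => {0}
  | n + 1 => Tseq v n ∪ ((fun x => x + transVec v n) '' Tseq v n)

/-!
An integer relation `⟨y, v⟩ = 0` is transported along the algorithm by `y ↦ Mᵀ y`, `M` the matrix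
of the current branch, since `⟨Mᵀ y, F v⟩ = ⟨y, v⟩`. On `F₃` all of `vⱼ + vₖ - vᵢ` are positive, and
`2⟨y, v⟩ = ∑ (yⱼ + yₖ)(vⱼ + vₖ - vᵢ)` shows that the only new entry `y₀ + y₁ + y₂` is smaller than
`‖y‖∞` in modulus. So `‖y‖∞` never increases, and an entry of maximal modulus can only move
towards coordinate `0`, where it is discarded. The first branch cannot be taken forever, so
eventually a maximal entry `c` stays in coordinate `2` and the third branch never occurs. Then
`y₀ + y₁` moves monotonically towards `2c`, which forces `y = (-c, -c, c)` at some second-branch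
step, i.e. `v₂ = v₀ + v₁` for an iterate of `v`, contradicting `v ∈ F₃`.
-/

lemma FS_mem_O3 {v : R3} (hv : v ∈ O3) : FS v ∈ O3 := by
  obtain ⟨h0, h01, h12⟩ := hv
  unfold FS
  split_ifs <;> refine ⟨?_, ?_, ?_⟩ <;> simp <;> grind

lemma FS_of_FSidx_eq_zero {v : R3} (h : FSidx v = 0) : FS v = ![v 0, v 1 - v 0, v 2 - v 0] := by
  unfold FSidx at h; unfold FS; split_ifs at h ⊢ <;> simp_all

lemma FS_of_FSidx_eq_one {v : R3} (h : FSidx v = 1) : FS v = ![v 1 - v 0, v 0, v 2 - v 0] := by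
  unfold FSidx at h; unfold FS; split_ifs at h ⊢ <;> simp_all

lemma FS_of_FSidx_eq_two {v : R3} (h : FSidx v = 2) : FS v = ![v 1 - v 0, v 2 - v 0, v 0] := by
  unfold FSidx at h; unfold FS; split_ifs at h ⊢ <;> simp_all

lemma FS_mem_F3set {v : R3} (hv : v ∈ F3set) : FS v ∈ F3set :=
  ⟨FS_mem_O3 hv.1, fun n => by simpa only [Function.iterate_succ_apply] using hv.2 (n + 1)⟩

lemma iterate_FS_mem_F3set {v : R3} (hv : v ∈ F3set) (n : ℕ) : FS^[n] v ∈ F3set := by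
  induction n with
  | zero => exact hv
  | succ n ih => rw [Function.iterate_succ_apply']; exact FS_mem_F3set ih

lemma lt_add_of_mem_F3set {v : R3} (hv : v ∈ F3set) : v 2 < v 0 + v 1 := by
  simpa using hv.2 0

lemma pos_of_mem_F3set {v : R3} (hv : v ∈ F3set) : 0 < v 0 := by
  linarith [hv.1.2.2, lt_add_of_mem_F3set hv]

lemma frequently_FSidx_ne_zero {v : R3} (hv : v ∈ F3set) :
    ∃ᶠ n in Filter.atTop, FSidx (FS^[n] v) ≠ 0 := by
  rw [Filter.frequently_atTop]
  intro K
  by_contra! hK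
  set w := FS^[K] v
  have hw : ∀ k : ℕ, (FS^[k] w) 0 = w 0 ∧ (FS^[k] w) 1 = w 1 - k * w 0 := by
    intro k
    induction k with
    | zero => simp
    | succ k ih =>
      have hk : FSidx (FS^[k] w) = 0 := by
        rw [← Function.iterate_add_apply]; exact hK _ (Nat.le_add_left K k)
      rw [Function.iterate_succ_apply', FS_of_FSidx_eq_zero hk]
      refine ⟨ih.1, ?_⟩
      simp only [Matrix.cons_val_one, ih.1, ih.2]
      push_cast; ring
  have hw0 : 0 < w 0 := pos_of_mem_F3set (iterate_FS_mem_F3set hv K)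
  obtain ⟨k, hk⟩ := exists_nat_gt (w 1 / w 0)
  have hle := (iterate_FS_mem_F3set hv (k + K)).1.2.1
  rw [Function.iterate_add_apply, (hw k).1, (hw k).2] at hle
  rw [div_lt_iff₀ hw0] at hk
  linarith

def dualStep (v : R3) (y : Z3) : Z3 := (Mmat (FSidx v))ᵀ *ᵥ y

lemma dualStep_of_FSidx_eq_zero {v : R3} (h : FSidx v = 0) (y : Z3) :
    dualStep v y = ![y 0 + y 1 + y 2, y 1, y 2] := by
  ext i; fin_cases i <;> simp [dualStep, h, Mmat, mulVec, dotProduct, Fin.sum_univ_three]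

lemma dualStep_of_FSidx_eq_one {v : R3} (h : FSidx v = 1) (y : Z3) :
    dualStep v y = ![y 1, y 0 + y 1 + y 2, y 2] := by
  ext i; fin_cases i <;> simp [dualStep, h, Mmat, mulVec, dotProduct, Fin.sum_univ_three]

lemma dualStep_of_FSidx_eq_two {v : R3} (h : FSidx v = 2) (y : Z3) :
    dualStep v y = ![y 1, y 2, y 0 + y 1 + y 2] := by
  ext i; fin_cases i <;> simp [dualStep, h, Mmat, mulVec, dotProduct, Fin.sum_univ_three]

lemma dot3_dualStep (v : R3) (y : Z3) : dot3 (dualStep v y) (FS v) = dot3 y v := by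
  rcases (by decide : ∀ i : Fin 3, i = 0 ∨ i = 1 ∨ i = 2) (FSidx v) with hi | hi | hi <;>
    simp [hi, dualStep_of_FSidx_eq_zero, dualStep_of_FSidx_eq_one, dualStep_of_FSidx_eq_two,
      FS_of_FSidx_eq_zero, FS_of_FSidx_eq_one, FS_of_FSidx_eq_two, dot3, Fin.sum_univ_three] <;>
    ring

lemma dualStep_ne_zero (v : R3) {y : Z3} (hy : y ≠ 0) : dualStep v y ≠ 0 := by
  contrapose! hy
  have h0 := congrFun hy 0; have h1 := congrFun hy 1; have h2 := congrFun hy 2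
  rcases (by decide : ∀ i : Fin 3, i = 0 ∨ i = 1 ∨ i = 2) (FSidx v) with hi | hi | hi <;>
    simp [hi, dualStep_of_FSidx_eq_zero, dualStep_of_FSidx_eq_one, dualStep_of_FSidx_eq_two]
      at h0 h1 h2 <;>
    ext i <;> fin_cases i <;> simp <;> omega

lemma dot3_neg (y : Z3) (v : R3) : dot3 (-y) v = -dot3 y v := by
  simp [dot3, Finset.sum_neg_distrib]

lemma dot3_pos_of_pair_sums_nonneg {v : R3} (hv : v ∈ F3set) {y : Z3} (hy : y ≠ 0)
    (h01 : 0 ≤ y 0 + y 1) (h02 : 0 ≤ y 0 + y 2) (h12 : 0 ≤ y 1 + y 2) : 0 < dot3 y v := by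
  have htri := lt_add_of_mem_F3set hv
  obtain ⟨-, hv01, hv12⟩ := hv.1
  have hpos : (0 : ℝ) < y 0 + y 1 ∨ (0 : ℝ) < y 0 + y 2 ∨ (0 : ℝ) < y 1 + y 2 := by
    have : 0 < y 0 + y 1 ∨ 0 < y 0 + y 2 ∨ 0 < y 1 + y 2 := by
      by_contra! h
      exact hy (by ext i; fin_cases i <;> simp <;> omega)
    exact_mod_cast this
  have hid : 2 * dot3 y v = (y 1 + y 2 : ℝ) * (v 1 + v 2 - v 0) +
      (y 0 + y 2 : ℝ) * (v 0 + v 2 - v 1) + (y 0 + y 1 : ℝ) * (v 0 + v 1 - v 2) := by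
    simp only [dot3, Fin.sum_univ_three]; ring
  have c01 : (0 : ℝ) ≤ y 0 + y 1 := by exact_mod_cast h01
  have c02 : (0 : ℝ) ≤ y 0 + y 2 := by exact_mod_cast h02
  have c12 : (0 : ℝ) ≤ y 1 + y 2 := by exact_mod_cast h12
  rcases hpos with h | h | h <;>
    nlinarith [mul_nonneg c01 (by linarith : (0 : ℝ) ≤ v 0 + v 1 - v 2),
      mul_nonneg c02 (by linarith : (0 : ℝ) ≤ v 0 + v 2 - v 1),
      mul_nonneg c12 (by linarith : (0 : ℝ) ≤ v 1 + v 2 - v 0)]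

def supNorm (y : Z3) : ℕ := max (y 0).natAbs (max (y 1).natAbs (y 2).natAbs)

lemma natAbs_sum_lt_supNorm {v : R3} (hv : v ∈ F3set) {y : Z3} (hy : y ≠ 0)
    (hd : dot3 y v = 0) : (y 0 + y 1 + y 2).natAbs < supNorm y := by
  by_contra! h
  unfold supNorm at h
  rcases le_total 0 (y 0 + y 1 + y 2) with hs | hs
  · have := dot3_pos_of_pair_sums_nonneg hv hy (by omega) (by omega) (by omega)
    linarith
  · have := dot3_pos_of_pair_sums_nonneg hv (neg_ne_zero.2 hy)
      (by simp; omega) (by simp; omega) (by simp; omega)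
    rw [dot3_neg] at this
    linarith

def maxPos (y : Z3) : ℕ :=
  if (y 2).natAbs = supNorm y then 2 else if (y 1).natAbs = supNorm y then 1 else 0

lemma maxPos_spec (y : Z3) :
    maxPos y = 2 ∧ (y 2).natAbs = supNorm y ∨
    maxPos y = 1 ∧ (y 2).natAbs < supNorm y ∧ (y 1).natAbs = supNorm y ∨
    maxPos y = 0 ∧ (y 2).natAbs < supNorm y ∧ (y 1).natAbs < supNorm y := by
  unfold maxPos supNorm
  split_ifs <;> omega

def dualPotential (y : Z3) : ℕ := 3 * supNorm y + maxPos y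

lemma dualPotential_dualStep {v : R3} (hv : v ∈ F3set) {y : Z3} (hy : y ≠ 0)
    (hd : dot3 y v = 0) :
    dualPotential (dualStep v y) ≤ dualPotential y ∧
      (dualPotential (dualStep v y) = dualPotential y →
        FSidx v = 0 ∧ maxPos y = 1 ∨ FSidx v ≠ 2 ∧ maxPos y = 2) := by
  have hσ := natAbs_sum_lt_supNorm hv hy hd
  have hmax := maxPos_spec y
  have hz := maxPos_spec (dualStep v y)
  unfold dualPotential
  rcases (by decide : ∀ i : Fin 3, i = 0 ∨ i = 1 ∨ i = 2) (FSidx v) with hi | hi | hi <;>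
    simp only [hi, dualStep_of_FSidx_eq_zero, dualStep_of_FSidx_eq_one, dualStep_of_FSidx_eq_two,
      supNorm, Matrix.cons_val_zero, Matrix.cons_val_one, Matrix.cons_val_two, Matrix.tail_cons,
      Matrix.head_cons, Fin.reduceEq, Fin.reduceNe, true_and, false_and, or_false,
      false_or] at * <;>
    omega

lemma dualStep_of_FSidx_ne_two {v : R3} (h : FSidx v ≠ 2) (y : Z3) :
    dualStep v y 2 = y 2 ∧ dualStep v y 0 + dualStep v y 1 = y 0 + 2 * y 1 + y 2 := by
  match hi : FSidx v with
  | 0 => simp [dualStep_of_FSidx_eq_zero hi]; ring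
  | 1 => simp [dualStep_of_FSidx_eq_one hi]; ring
  | 2 => exact absurd hi h

def dualOrbit (v : R3) (y : Z3) : ℕ → Z3
  | 0 => y
  | n + 1 => dualStep (FS^[n] v) (dualOrbit v y n)

lemma dot3_dualOrbit {v : R3} {y : Z3} (hd : dot3 y v = 0) (n : ℕ) :
    dot3 (dualOrbit v y n) (FS^[n] v) = 0 := by
  induction n with
  | zero => exact hd
  | succ n ih => rw [dualOrbit, Function.iterate_succ_apply', dot3_dualStep, ih]

lemma dualOrbit_ne_zero (v : R3) {y : Z3} (hy : y ≠ 0) (n : ℕ) : dualOrbit v y n ≠ 0 := by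
  induction n with
  | zero => exact hy
  | succ n ih => exact dualStep_ne_zero _ ih

lemma dualOrbit_two_eq {v : R3} {y : Z3} {N : ℕ} (hidx : ∀ n ≥ N, FSidx (FS^[n] v) ≠ 2) :
    ∀ n ≥ N, dualOrbit v y n 2 = dualOrbit v y N 2 := by
  intro n hn
  induction n, hn using Nat.le_induction with
  | base => rfl
  | succ n hn ih => rw [← ih]; exact (dualStep_of_FSidx_ne_two (hidx n hn) _).1

lemma eventually_dualOrbit_one_eq_neg {v : R3} {y : Z3} {N : ℕ}
    (hidx : ∀ n ≥ N, FSidx (FS^[n] v) ≠ 2)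
    (hbox : ∀ n ≥ N, ∀ i, (dualOrbit v y n i).natAbs ≤ (dualOrbit v y N 2).natAbs) :
    ∀ᶠ n in Filter.atTop, dualOrbit v y n 1 = -dualOrbit v y N 2 := by
  set Y := dualOrbit v y
  set c := Y N 2
  have hD : ∀ n ≥ N, (Y (n + 1) 0 + Y (n + 1) 1 - 2 * c).natAbs ≤ (Y n 0 + Y n 1 - 2 * c).natAbs ∧
      ((Y (n + 1) 0 + Y (n + 1) 1 - 2 * c).natAbs = (Y n 0 + Y n 1 - 2 * c).natAbs →
        Y n 1 = -c) := by
    intro n hn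
    have : Y (n + 1) 2 = Y n 2 ∧ Y (n + 1) 0 + Y (n + 1) 1 = Y n 0 + 2 * Y n 1 + Y n 2 :=
      dualStep_of_FSidx_ne_two (hidx n hn) (Y n)
    have : Y n 2 = c := dualOrbit_two_eq hidx n hn
    have := hbox n hn 0; have := hbox n hn 1
    have := hbox (n + 1) (by omega) 0; have := hbox (n + 1) (by omega) 1
    omega
  obtain ⟨K, hK⟩ := WellFoundedLT.antitone_chain_condition
    (f := fun k => (Y (N + k) 0 + Y (N + k) 1 - 2 * c).natAbs)
    (antitone_nat_of_succ_le fun k => (hD (N + k) (by omega)).1)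
  refine Filter.eventually_atTop.2 ⟨N + K, fun n hn => ?_⟩
  obtain ⟨k, rfl⟩ := Nat.exists_eq_add_of_le hn
  refine (hD _ (by omega)).2 ?_
  have := (hK (K + k) (by omega)).symm.trans (hK (K + k + 1) (by omega))
  simpa only [← add_assoc] using this.symm

lemma exists_FSidx_eq_two_of_maxPos_eq_two {v : R3} (hv : v ∈ F3set) {y : Z3} (hy : y ≠ 0)
    (hd : dot3 y v = 0) (N : ℕ) (hpos : ∀ n ≥ N, maxPos (dualOrbit v y n) = 2) :
    ∃ n ≥ N, FSidx (FS^[n] v) = 2 := by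
  by_contra! hidx
  set Y := dualOrbit v y
  set c := Y N 2
  have hc : ∀ n ≥ N, Y n 2 = c := dualOrbit_two_eq hidx
  have hbox : ∀ n ≥ N, ∀ i, (Y n i).natAbs ≤ c.natAbs := by
    intro n hn i
    have h2 := hpos n hn
    have := maxPos_spec (Y n)
    simp only [supNorm] at this
    rw [← hc n hn]
    fin_cases i <;> simp <;> omega
  have hc0 : c ≠ 0 := by
    intro h0
    apply dualOrbit_ne_zero v hy N
    ext i; simpa [h0] using hbox N le_rfl i
  have hev : ∀ᶠ n in Filter.atTop, N ≤ n ∧ Y n 1 = -c ∧ Y (n + 1) 1 = -c :=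
    (Filter.eventually_ge_atTop N).and <| (eventually_dualOrbit_one_eq_neg hidx hbox).and <|
      (Filter.tendsto_add_atTop_nat 1).eventually (eventually_dualOrbit_one_eq_neg hidx hbox)
  obtain ⟨m, hm0, hmN, hm1, hm1'⟩ := ((frequently_FSidx_ne_zero hv).and_eventually hev).exists
  have hidx1 : FSidx (FS^[m] v) = 1 :=
    (by decide : ∀ i : Fin 3, i ≠ 0 → i ≠ 2 → i = 1) _ hm0 (hidx m hmN)
  have hy0 : Y m 0 = -c := by
    have hσ : Y (m + 1) 1 = Y m 0 + Y m 1 + Y m 2 := by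
      simp [Y, dualOrbit, dualStep_of_FSidx_eq_one hidx1]
    have := hc m hmN
    omega
  have hdot : dot3 (Y m) (FS^[m] v) = 0 := dot3_dualOrbit hd m
  simp only [dot3, Fin.sum_univ_three] at hdot
  rw [hy0, hm1, hc m hmN] at hdot
  have htri := lt_add_of_mem_F3set (iterate_FS_mem_F3set hv m)
  have hc' : (c : ℝ) ≠ 0 := by exact_mod_cast hc0
  have : (c : ℝ) * ((FS^[m] v) 2 - (FS^[m] v) 0 - (FS^[m] v) 1) = 0 := by
    push_cast at hdot; linarith
  exact (mul_eq_zero.1 this).elim hc' fun h => by linarith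

lemma eq_zero_of_dot3_eq_zero {v : R3} (hv : v ∈ F3set) {y : Z3} (hd : dot3 y v = 0) : y = 0 := by
  by_contra hy
  have hstep n := dualPotential_dualStep (iterate_FS_mem_F3set hv n) (dualOrbit_ne_zero v hy n)
    (dot3_dualOrbit hd n)
  obtain ⟨N, hN⟩ := WellFoundedLT.antitone_chain_condition
    (f := fun n => dualPotential (dualOrbit v y n)) (antitone_nat_of_succ_le fun n => (hstep n).1)
  have hflat n (hn : N ≤ n) := (hstep n).2 ((hN (n + 1) (by omega)).symm.trans (hN n hn))
  have hconst n (hn : N ≤ n) : maxPos (dualOrbit v y n) = maxPos (dualOrbit v y N) := by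
    have := hN n hn
    unfold dualPotential at this
    rcases hflat n hn with ⟨-, h⟩ | ⟨-, h⟩ <;>
      rcases hflat N le_rfl with ⟨-, h'⟩ | ⟨-, h'⟩ <;> omega
  rcases hflat N le_rfl with ⟨-, h1⟩ | ⟨-, h2⟩
  · obtain ⟨n, hn, hne⟩ := Filter.frequently_atTop.1 (frequently_FSidx_ne_zero hv) N
    rcases hflat n hn with ⟨h0, -⟩ | ⟨-, h2⟩
    · exact hne h0
    · have := hconst n hn; omega
  · obtain ⟨n, hn, h⟩ :=
      exists_FSidx_eq_two_of_maxPos_eq_two hv hy hd N fun n hn => (hconst n hn).trans h2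
    rcases hflat n hn with ⟨h0, -⟩ | ⟨hne, -⟩
    · exact absurd (h.symm.trans h0) (by decide)
    · exact hne h

lemma linearIndependent_int_iff_dot3 (v : R3) :
    LinearIndependent ℤ v ↔ ∀ x : Z3, dot3 x v = 0 → x = 0 := by
  simp [Fintype.linearIndependent_iff, dot3, zsmul_eq_mul, funext_iff]

/-- If `v ∈ F₃` then `dim_ℚ(v₁,v₂,v₃) = 3`; that is, `v₁,v₂,v₃` are
ℚ-linearly independent; equivalently, the only `x ∈ ℤ³` with `⟨v, x⟩ = 0` is `x = 0`. -/
theorem F3_rationally_independent (v : R3) (hv : v ∈ F3set) :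
    Module.finrank ℚ (Submodule.span ℚ ({v 0, v 1, v 2} : Set ℝ)) = 3 ∧
    LinearIndependent ℚ ![v 0, v 1, v 2] ∧
    ∀ x : Z3, dot3 x v = 0 → x = 0 := by
  have hker : ∀ x : Z3, dot3 x v = 0 → x = 0 := fun x => eq_zero_of_dot3_eq_zero hv
  have hvec : ![v 0, v 1, v 2] = v := by ext i; fin_cases i <;> rfl
  have hQ : LinearIndependent ℚ v :=
    (LinearIndependent.iff_fractionRing ℤ ℚ).1 ((linearIndependent_int_iff_dot3 v).2 hker)
  have hrange : ({v 0, v 1, v 2} : Set ℝ) = Set.range v := by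
    rw [← hvec, Matrix.range_cons, Matrix.range_cons, Matrix.range_cons_empty]
    rfl
  refine ⟨?_, hvec ▸ hQ, hker⟩
  rw [hrange, finrank_span_eq_card hQ, Fintype.card_fin]
end
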